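/- (Lemma 3.9, Plateau proxy for ℰ^IP_π.) For every integer ℓ ≥ 2 there exists a constant C = C(ℓ) < ∞ such that for every n ≥ 1, with 𝔾 = (ℤ/ℓℤ)^n, p := (ℓ−1)/ℓ, ℐ := {k ∈ {0,…,n} : |k − np| < 2√(np(1−p))} and ρ_ℐ := (1/|ℐ|)·Σ_{k∈ℐ} ρ_k, one has ℰ^IP_π(f) ≤ C · ℰ^IP_{ρ_ℐ}(f) for every f : 𝔖(𝔾) → ℝ. -/

import Mathlib

open Finset

/-- The group `(ℤ/ℓℤ)^n`. -/
abbrev GG (ℓ n : ℕ) : Type := Fin n → ZMod ℓ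

/-- The Dirichlet form of the interchange process on `𝔾 = (ℤ/ℓℤ)^n` with increment
law `μ`. -/
noncomputable def ipFormG (ℓ n : ℕ) [NeZero ℓ] (μ : GG ℓ n → ℝ)
    (f : Equiv.Perm (GG ℓ n) → ℝ) : ℝ :=
  (1 / (2 * (Nat.factorial (Fintype.card (GG ℓ n)) : ℝ))) *
    ∑ σ : Equiv.Perm (GG ℓ n), ∑ x : GG ℓ n, ∑ z : GG ℓ n,
      μ z * (f (σ * Equiv.swap x (x + z)) - f σ) ^ 2

/-- Convolution of two measures on `(ℤ/ℓℤ)^n`. -/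
noncomputable def conv {ℓ n : ℕ} [NeZero ℓ] (μ ν : GG ℓ n → ℝ) : GG ℓ n → ℝ :=
  fun x => ∑ z : GG ℓ n, μ z * ν (x - z)

/-- `m`-fold self-convolution: `convIter μ 0` is the Dirac mass at `0` and
`convIter μ (m+1) = μ ⋆ convIter μ m`; in particular `convIter μ 1 = μ`. -/
noncomputable def convIter {ℓ n : ℕ} [NeZero ℓ] (μ : GG ℓ n → ℝ) : ℕ → (GG ℓ n → ℝ)
  | 0 => fun x => if x = 0 then 1 else 0
  | (m + 1) => conv μ (convIter μ m)

/-- The number of nonzero coordinates of `x`. -/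
def suppCard {ℓ n : ℕ} (x : GG ℓ n) : ℕ :=
  (Finset.univ.filter fun i => x i ≠ 0).card

/-- `ρ_k`, the uniform probability measure on the set of elements of `(ℤ/ℓℤ)^n`
with exactly `k` nonzero coordinates. -/
noncomputable def rho (ℓ n : ℕ) [NeZero ℓ] (k : ℕ) : GG ℓ n → ℝ :=
  fun x => if suppCard x = k
    then 1 / ((Finset.univ.filter fun y : GG ℓ n => suppCard y = k).card : ℝ)
    else 0

/-- `π`, the uniform probability measure on `(ℤ/ℓℤ)^n`. -/
noncomputable def unifG (ℓ n : ℕ) [NeZero ℓ] : GG ℓ n → ℝ :=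
  fun _ => 1 / (Fintype.card (GG ℓ n) : ℝ)

/-- `p := (ℓ-1)/ℓ`. -/
noncomputable def pVal (ℓ : ℕ) : ℝ := ((ℓ : ℝ) - 1) / ℓ

open scoped Classical in
/-- `ℐ := {k ∈ {0,…,n} : |k − np| < 2√(np(1−p))}`. -/
noncomputable def setI (ℓ n : ℕ) : Finset ℕ :=
  (Finset.range (n + 1)).filter fun k =>
    |(k : ℝ) - n * pVal ℓ| < 2 * Real.sqrt (n * pVal ℓ * (1 - pVal ℓ))

/-- `ρ_ℐ := (1/|ℐ|) ∑_{k ∈ ℐ} ρ_k`. -/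
noncomputable def rhoI (ℓ n : ℕ) [NeZero ℓ] : GG ℓ n → ℝ :=
  fun x => (1 / ((setI ℓ n).card : ℝ)) * ∑ k ∈ setI ℓ n, rho ℓ n k x


section Helpers
set_option linter.unusedSectionVars false

variable {ℓ n : ℕ} [NeZero ℓ]

lemma suppCard_cons (a : ZMod ℓ) (v : GG ℓ n) :
    suppCard (Fin.cons a v) = (if a ≠ 0 then 1 else 0) + suppCard v := by
  simp [suppCard, Finset.card_filter, Fin.sum_univ_succ]

lemma sum_GG_succ {M : Type*} [AddCommMonoid M] (φ : GG ℓ (n+1) → M) :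
    ∑ x : GG ℓ (n+1), φ x = ∑ a : ZMod ℓ, ∑ v : GG ℓ n, φ (Fin.cons a v) := by
  rw [← Fintype.sum_prod_type']
  exact (Fintype.sum_equiv (Fin.consEquiv _) _ _ (fun p => rfl)).symm

lemma card_ZMod_ne_zero : (Finset.univ.filter fun a : ZMod ℓ => a ≠ 0).card = ℓ - 1 := by
  have h1 : (Finset.univ.filter fun a : ZMod ℓ => a ≠ 0) = Finset.univ \ {0} := by
    ext a; simp
  rw [h1, Finset.card_sdiff_of_subset (by simp)]
  simp [ZMod.card]

lemma sum_phi_suppCard_succ (φ : ℕ → ℝ) :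
    ∑ x : GG ℓ (n+1), φ (suppCard x) =
      ((ℓ : ℝ) - 1) * (∑ v : GG ℓ n, φ (suppCard v + 1)) + ∑ v : GG ℓ n, φ (suppCard v) := by
  rw [sum_GG_succ (fun x => φ (suppCard x))]
  have : ∀ a : ZMod ℓ, ∑ v : GG ℓ n, φ (suppCard (Fin.cons a v)) =
      if a ≠ 0 then (∑ v : GG ℓ n, φ (suppCard v + 1)) else ∑ v : GG ℓ n, φ (suppCard v) := by
    intro a
    by_cases ha : a = 0 <;> simp [suppCard_cons, ha, Nat.add_comm]
  rw [Finset.sum_congr rfl (fun a _ => this a)]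
  classical
  rw [Finset.sum_ite, Finset.sum_const, Finset.sum_const]
  have h2 : (Finset.univ.filter fun a : ZMod ℓ => ¬ a ≠ 0).card = 1 := by
    simp only [not_not]
    rw [Finset.filter_eq' Finset.univ (0 : ZMod ℓ)]
    simp
  rw [card_ZMod_ne_zero, h2, one_smul, nsmul_eq_mul,
    Nat.cast_sub (Nat.one_le_iff_ne_zero.mpr (NeZero.ne ℓ))]
  push_cast
  ring

lemma card_GG : (Fintype.card (GG ℓ n) : ℝ) = (ℓ:ℝ)^n := by
  simp [ZMod.card]

lemma sum_ind_suppCard_succ (k : ℕ) :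
    ((Finset.univ.filter fun y : GG ℓ (n+1) => suppCard y = k).card) =
      (ℓ - 1) * ((Finset.univ.filter fun y : GG ℓ n => suppCard y + 1 = k).card)
        + (Finset.univ.filter fun y : GG ℓ n => suppCard y = k).card := by
  classical
  rw [Finset.card_filter, Finset.card_filter, Finset.card_filter,
    sum_GG_succ (fun x => if suppCard x = k then 1 else 0)]
  have : ∀ a : ZMod ℓ, (∑ v : GG ℓ n, if suppCard (Fin.cons a v) = k then 1 else 0) =
      if a ≠ 0 then (∑ v : GG ℓ n, if suppCard v + 1 = k then 1 else 0)
      else (∑ v : GG ℓ n, if suppCard v = k then 1 else 0) := by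
    intro a
    by_cases ha : a = 0 <;> simp [suppCard_cons, ha, Nat.add_comm]
  rw [Finset.sum_congr rfl (fun a _ => this a), Finset.sum_ite, Finset.sum_const,
    Finset.sum_const]
  have h2 : (Finset.univ.filter fun a : ZMod ℓ => ¬ a ≠ 0).card = 1 := by
    simp only [not_not]
    rw [Finset.filter_eq' Finset.univ (0 : ZMod ℓ)]
    simp
  rw [card_ZMod_ne_zero, h2, one_smul, smul_eq_mul]

lemma card_sphere (n k : ℕ) :
    ((Finset.univ.filter fun y : GG ℓ n => suppCard y = k).card) =
      n.choose k * (ℓ - 1)^k := by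
  classical
  induction n generalizing k with
  | zero =>
    rcases k with _ | k
    · simp [suppCard]
    · simp [suppCard]
  | succ n ih =>
    rw [sum_ind_suppCard_succ]
    rcases k with _ | k
    · have : (Finset.univ.filter fun y : GG ℓ n => suppCard y + 1 = 0) = ∅ := by
        apply Finset.filter_false_of_mem; intro x _; omega
      rw [this]
      simp [ih 0]
    · have : (Finset.univ.filter fun y : GG ℓ n => suppCard y + 1 = k + 1) =
          (Finset.univ.filter fun y : GG ℓ n => suppCard y = k) := by
        apply Finset.filter_congr; intro x _; simp
      rw [this, ih k, ih (k+1), Nat.choose_succ_succ]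
      ring

lemma sum_sq_expand (g : GG ℓ n → ℝ) (c : ℝ) :
    ∑ v : GG ℓ n, (g v + c)^2 =
      (∑ v : GG ℓ n, (g v)^2) + 2*c*(∑ v : GG ℓ n, g v) + c^2 * (ℓ:ℝ)^n := by
  have : ∀ v : GG ℓ n, (g v + c)^2 = (g v)^2 + 2*c*(g v) + c^2 := fun v => by ring
  rw [Finset.sum_congr rfl (fun v _ => this v), Finset.sum_add_distrib,
    Finset.sum_add_distrib, Finset.sum_const, ← Finset.mul_sum, nsmul_eq_mul,
    Finset.card_univ, card_GG]
  ring

lemma sum_centered (n : ℕ) :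
    ∑ v : GG ℓ n, ((suppCard v : ℝ) - n * (((ℓ:ℝ)-1)/ℓ)) = 0 := by
  have hℓ : (ℓ:ℝ) ≠ 0 := Nat.cast_ne_zero.mpr (NeZero.ne ℓ)
  induction n with
  | zero => simp [suppCard]
  | succ n ih =>
    push_cast
    rw [sum_phi_suppCard_succ (fun k => (k:ℝ) - ((n:ℝ)+1) * (((ℓ:ℝ)-1)/ℓ))]
    have e1 : ∀ v : GG ℓ n, ((suppCard v + 1 : ℕ):ℝ) - (n+1) * (((ℓ:ℝ)-1)/ℓ)
        = ((suppCard v : ℝ) - n * (((ℓ:ℝ)-1)/ℓ)) + (1/ℓ) := fun v => by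
      push_cast; field_simp; ring
    have e2 : ∀ v : GG ℓ n, ((suppCard v : ℕ):ℝ) - (n+1) * (((ℓ:ℝ)-1)/ℓ)
        = ((suppCard v : ℝ) - n * (((ℓ:ℝ)-1)/ℓ)) + (-(((ℓ:ℝ)-1)/ℓ)) := fun v => by
      push_cast; ring
    rw [Finset.sum_congr rfl (fun v _ => e1 v), Finset.sum_congr rfl (fun v _ => e2 v),
      Finset.sum_add_distrib, Finset.sum_add_distrib, ih]
    simp only [Finset.sum_const, Finset.card_univ, nsmul_eq_mul, card_GG]
    field_simp
    ring

lemma sum_var (n : ℕ) :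
    ∑ v : GG ℓ n, ((suppCard v : ℝ) - n * (((ℓ:ℝ)-1)/ℓ))^2
      = n * (((ℓ:ℝ)-1)/ℓ) * (1/ℓ) * (ℓ:ℝ)^n := by
  have hℓ : (ℓ:ℝ) ≠ 0 := Nat.cast_ne_zero.mpr (NeZero.ne ℓ)
  induction n with
  | zero => simp [suppCard]
  | succ n ih =>
    push_cast
    rw [sum_phi_suppCard_succ (fun k => ((k:ℝ) - ((n:ℝ)+1) * (((ℓ:ℝ)-1)/ℓ))^2)]
    have e1 : ∀ v : GG ℓ n, (((suppCard v + 1 : ℕ):ℝ) - (n+1) * (((ℓ:ℝ)-1)/ℓ))^2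
        = (((suppCard v : ℝ) - n * (((ℓ:ℝ)-1)/ℓ)) + (1/ℓ))^2 := fun v => by
      push_cast; field_simp; ring
    have e2 : ∀ v : GG ℓ n, (((suppCard v : ℕ):ℝ) - (n+1) * (((ℓ:ℝ)-1)/ℓ))^2
        = (((suppCard v : ℝ) - n * (((ℓ:ℝ)-1)/ℓ)) + (-(((ℓ:ℝ)-1)/ℓ)))^2 := fun v => by
      push_cast; ring
    rw [Finset.sum_congr rfl (fun v _ => e1 v), Finset.sum_congr rfl (fun v _ => e2 v),
      sum_sq_expand, sum_sq_expand, ih, sum_centered]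
    field_simp
    ring

lemma one_sub_pVal : 1 - pVal ℓ = 1 / (ℓ:ℝ) := by
  have hℓ : (ℓ:ℝ) ≠ 0 := Nat.cast_ne_zero.mpr (NeZero.ne ℓ)
  unfold pVal; field_simp; ring

lemma suppCard_le (v : GG ℓ n) : suppCard v ≤ n := by
  classical
  calc suppCard v ≤ (univ : Finset (Fin n)).card := Finset.card_filter_le _ _
  _ = n := by simp

lemma mem_setI {k : ℕ} : k ∈ setI ℓ n ↔ k ≤ n ∧
    |(k : ℝ) - n * pVal ℓ| < 2 * Real.sqrt (n * pVal ℓ * (1 - pVal ℓ)) := by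
  classical
  simp [setI, Nat.lt_succ_iff]

lemma sphere_card_pos (hℓ : 2 ≤ ℓ) {k : ℕ} (hk : k ≤ n) :
    0 < ((Finset.univ.filter fun y : GG ℓ n => suppCard y = k).card) := by
  rw [card_sphere]
  exact Nat.mul_pos (Nat.choose_pos hk) (pow_pos (by omega) _)

lemma rho_nonneg (k : ℕ) (x : GG ℓ n) : 0 ≤ rho ℓ n k x := by
  unfold rho
  split
  · positivity
  · exact le_refl 0

lemma sum_rho (hℓ : 2 ≤ ℓ) {k : ℕ} (hk : k ≤ n) : ∑ x : GG ℓ n, rho ℓ n k x = 1 := by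
  classical
  unfold rho
  rw [Finset.sum_ite, Finset.sum_const, Finset.sum_const, smul_zero, add_zero, nsmul_eq_mul]
  have h := sphere_card_pos (n := n) hℓ hk
  field_simp

lemma pq_pos (hℓ : 2 ≤ ℓ) (hn : 1 ≤ n) : 0 < (n:ℝ) * pVal ℓ * (1 - pVal ℓ) := by
  have h1 : (0:ℝ) < n := by exact_mod_cast hn
  have h2 : (2:ℝ) ≤ ℓ := by exact_mod_cast hℓ
  rw [one_sub_pVal]
  unfold pVal
  apply mul_pos (mul_pos h1 (div_pos (by linarith) (by linarith)))
  positivity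

lemma sqrt4 (t : ℝ) (ht : 0 ≤ t) : Real.sqrt (4 * t) = 2 * Real.sqrt t := by
  rw [show (4:ℝ) = 2^2 by norm_num, Real.sqrt_mul (by positivity), Real.sqrt_sq (by norm_num)]

lemma abs_lt_two_sqrt {x t : ℝ} (ht : 0 < t) (h : x^2 < 4 * t) :
    |x| < 2 * Real.sqrt t := by
  have := Real.sqrt_lt_sqrt (sq_nonneg x) h
  rwa [Real.sqrt_sq_eq_abs, sqrt4 t ht.le] at this

lemma ceil_mem_setI (hℓ : 2 ≤ ℓ) (hn : 1 ≤ n) : (n - n / ℓ) ∈ setI ℓ n := by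
  rw [mem_setI]
  refine ⟨Nat.sub_le _ _, ?_⟩
  apply abs_lt_two_sqrt (pq_pos hℓ hn)
  have hℓ0 : (0:ℝ) < ℓ := by exact_mod_cast Nat.lt_of_lt_of_le Nat.zero_lt_two hℓ
  have hℓ2 : (2:ℝ) ≤ ℓ := by exact_mod_cast hℓ
  have hn1 : (1:ℝ) ≤ n := by exact_mod_cast hn
  have hcast : ((n - n / ℓ : ℕ) : ℝ) = (n:ℝ) - ((n/ℓ : ℕ):ℝ) := by
    rw [Nat.cast_sub (Nat.div_le_self _ _)]
  have hmod : (ℓ:ℝ) * ((n/ℓ : ℕ):ℝ) + ((n % ℓ : ℕ):ℝ) = n := by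
    exact_mod_cast Nat.div_add_mod n ℓ
  have hr1 : ((n % ℓ : ℕ):ℝ) ≤ (ℓ:ℝ) - 1 := by
    have : n % ℓ + 1 ≤ ℓ := Nat.mod_lt _ (by omega)
    have : ((n % ℓ + 1 : ℕ):ℝ) ≤ (ℓ:ℝ) := by exact_mod_cast this
    push_cast at this; linarith
  have hr2 : ((n % ℓ : ℕ):ℝ) ≤ (n:ℝ) := by exact_mod_cast Nat.mod_le n ℓ
  have hr0 : (0:ℝ) ≤ ((n % ℓ : ℕ):ℝ) := by positivity
  have key : ((n - n / ℓ : ℕ) : ℝ) - n * pVal ℓ = ((n % ℓ : ℕ):ℝ) / ℓ := by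
    rw [hcast]; unfold pVal; field_simp; linarith
  rw [key, one_sub_pVal]
  unfold pVal
  rw [div_pow, div_lt_iff₀ (by positivity)]
  have expand : 4 * ((n:ℝ) * (((ℓ:ℝ)-1)/ℓ) * (1/ℓ)) * (ℓ:ℝ)^2 = 4 * n * ((ℓ:ℝ)-1) := by
    field_simp
  rw [expand]
  nlinarith [mul_le_mul hr1 hr2 hr0 (by linarith : (0:ℝ) ≤ (ℓ:ℝ) - 1)]

lemma setI_nonempty (hℓ : 2 ≤ ℓ) (hn : 1 ≤ n) : (setI ℓ n).Nonempty :=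
  ⟨_, ceil_mem_setI hℓ hn⟩

lemma card_setI_pos (hℓ : 2 ≤ ℓ) (hn : 1 ≤ n) : 0 < (setI ℓ n).card :=
  Finset.card_pos.mpr (setI_nonempty hℓ hn)

lemma rhoI_nonneg (x : GG ℓ n) : 0 ≤ rhoI ℓ n x := by
  unfold rhoI
  apply mul_nonneg (by positivity)
  exact Finset.sum_nonneg fun k _ => rho_nonneg k x

lemma sum_rhoI (hℓ : 2 ≤ ℓ) (hn : 1 ≤ n) : ∑ x : GG ℓ n, rhoI ℓ n x = 1 := by
  unfold rhoI
  rw [← Finset.mul_sum, Finset.sum_comm]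
  have : ∀ k ∈ setI ℓ n, ∑ x : GG ℓ n, rho ℓ n k x = 1 := fun k hk =>
    sum_rho hℓ (mem_setI.mp hk).1
  rw [Finset.sum_congr rfl this, Finset.sum_const, nsmul_eq_mul, mul_one]
  have := card_setI_pos hℓ hn
  field_simp

lemma cheb_bad (hℓ : 2 ≤ ℓ) (hn : 1 ≤ n) :
    ((Finset.univ.filter fun v : GG ℓ n => suppCard v ∉ setI ℓ n).card : ℝ)
      ≤ (ℓ:ℝ)^n / 4 := by
  classical
  set t := (n:ℝ) * pVal ℓ * (1 - pVal ℓ) with ht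
  have htpos : 0 < t := pq_pos hℓ hn
  set bad := Finset.univ.filter fun v : GG ℓ n => suppCard v ∉ setI ℓ n with hbad
  have h1 : ∀ v ∈ bad, 4 * t ≤ ((suppCard v : ℝ) - n * pVal ℓ)^2 := by
    intro v hv
    rw [hbad, Finset.mem_filter] at hv
    have habs : 2 * Real.sqrt t ≤ |(suppCard v : ℝ) - n * pVal ℓ| := by
      by_contra hc; push_neg at hc
      exact hv.2 (mem_setI.mpr ⟨suppCard_le v, hc⟩)
    have h2 : (2 * Real.sqrt t)^2 ≤ |(suppCard v : ℝ) - n * pVal ℓ|^2 :=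
      pow_le_pow_left₀ (by positivity) habs 2
    rw [sq_abs] at h2
    have h3 : (2 * Real.sqrt t)^2 = 4 * t := by
      rw [mul_pow, Real.sq_sqrt htpos.le]; ring
    linarith
  have hvar : ∑ v : GG ℓ n, ((suppCard v : ℝ) - n * pVal ℓ)^2 = t * (ℓ:ℝ)^n := by
    rw [ht, one_sub_pVal]
    show ∑ v : GG ℓ n, ((suppCard v : ℝ) - n * (((ℓ:ℝ)-1)/ℓ))^2
      = (n:ℝ) * (((ℓ:ℝ)-1)/ℓ) * (1/(ℓ:ℝ)) * (ℓ:ℝ)^n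
    exact sum_var n
  have h2 : (bad.card : ℝ) * (4 * t) ≤ t * (ℓ:ℝ)^n := by
    calc (bad.card : ℝ) * (4 * t) = ∑ _v ∈ bad, (4*t) := by
          rw [Finset.sum_const, nsmul_eq_mul]
      _ ≤ ∑ v ∈ bad, ((suppCard v : ℝ) - n * pVal ℓ)^2 := Finset.sum_le_sum h1
      _ ≤ ∑ v : GG ℓ n, ((suppCard v : ℝ) - n * pVal ℓ)^2 := by
          apply Finset.sum_le_sum_of_subset_of_nonneg (Finset.subset_univ _)
          intro i _ _; positivity
      _ = t * (ℓ:ℝ)^n := hvar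
  nlinarith [htpos]

lemma card_sub_bij (w : GG ℓ n) (Q : ℕ → Prop) [DecidablePred Q] :
    (Finset.univ.filter fun v : GG ℓ n => Q (suppCard (w - v))).card
      = (Finset.univ.filter fun v : GG ℓ n => Q (suppCard v)).card := by
  apply Finset.card_nbij (i := fun v => w - v)
  · intro v hv
    simp only [Finset.mem_coe, Finset.mem_filter, Finset.mem_univ, true_and] at *
    exact hv
  · intro a ha b hb hab
    simpa using sub_right_injective hab
  · intro u hu
    simp only [Finset.coe_filter, Set.mem_setOf_eq, Set.mem_image] at *
    exact ⟨w - u, by simpa using hu.2, by simp⟩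

lemma good_count (hℓ : 2 ≤ ℓ) (hn : 1 ≤ n) (w : GG ℓ n) :
    (ℓ:ℝ)^n / 2 ≤
      ((Finset.univ.filter fun v : GG ℓ n =>
        suppCard v ∈ setI ℓ n ∧ suppCard (w - v) ∈ setI ℓ n).card : ℝ) := by
  classical
  have hsplit := Finset.card_filter_add_card_filter_not
    (s := (Finset.univ : Finset (GG ℓ n)))
    (p := fun v => suppCard v ∈ setI ℓ n ∧ suppCard (w - v) ∈ setI ℓ n)
  have hsub : (Finset.univ.filter fun v : GG ℓ n =>
      ¬(suppCard v ∈ setI ℓ n ∧ suppCard (w - v) ∈ setI ℓ n)) ⊆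
      (Finset.univ.filter fun v : GG ℓ n => suppCard v ∉ setI ℓ n) ∪
      (Finset.univ.filter fun v : GG ℓ n => suppCard (w - v) ∉ setI ℓ n) := by
    intro v hv
    simp only [Finset.mem_filter, Finset.mem_union, Finset.mem_univ, true_and] at *
    tauto
  have hb2 : ((Finset.univ.filter fun v : GG ℓ n => suppCard (w-v) ∉ setI ℓ n).card : ℝ)
      ≤ (ℓ:ℝ)^n / 4 := by
    rw [card_sub_bij w (fun k => k ∉ setI ℓ n)]
    exact cheb_bad hℓ hn
  have hb1 := cheb_bad hℓ hn
  have hcard : ((Finset.univ : Finset (GG ℓ n)).card : ℝ) = (ℓ:ℝ)^n := by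
    rw [Finset.card_univ]; exact card_GG
  have hle := Finset.card_le_card hsub
  have hun := Finset.card_union_le
    (Finset.univ.filter fun v : GG ℓ n => suppCard v ∉ setI ℓ n)
    (Finset.univ.filter fun v : GG ℓ n => suppCard (w - v) ∉ setI ℓ n)
  have e1 : ((Finset.univ.filter fun v : GG ℓ n =>
      suppCard v ∈ setI ℓ n ∧ suppCard (w - v) ∈ setI ℓ n).card : ℝ)
      + ((Finset.univ.filter fun v : GG ℓ n =>
      ¬(suppCard v ∈ setI ℓ n ∧ suppCard (w - v) ∈ setI ℓ n)).card : ℝ) = (ℓ:ℝ)^n := by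
    rw [← hcard]; exact_mod_cast hsplit
  have e2 : ((Finset.univ.filter fun v : GG ℓ n =>
      ¬(suppCard v ∈ setI ℓ n ∧ suppCard (w - v) ∈ setI ℓ n)).card : ℝ) ≤
      ((Finset.univ.filter fun v : GG ℓ n => suppCard v ∉ setI ℓ n).card : ℝ)
      + ((Finset.univ.filter fun v : GG ℓ n => suppCard (w-v) ∉ setI ℓ n).card : ℝ) := by
    exact_mod_cast le_trans hle hun
  linarith

noncomputable def Scr (ℓ : ℕ) [NeZero ℓ] (n k : ℕ) : ℝ :=
  ((Finset.univ.filter fun y : GG ℓ n => suppCard y = k).card : ℝ)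

lemma Scr_eq (n k : ℕ) : Scr ℓ n k = (n.choose k : ℝ) * ((ℓ:ℝ)-1)^k := by
  have hl : 1 ≤ ℓ := Nat.one_le_iff_ne_zero.mpr (NeZero.ne ℓ)
  unfold Scr
  rw [card_sphere]
  push_cast [hl]
  ring

lemma Scr_pos (hℓ : 2 ≤ ℓ) {k : ℕ} (hk : k ≤ n) : 0 < Scr ℓ n k := by
  unfold Scr
  exact_mod_cast sphere_card_pos hℓ hk

lemma Scr_nonneg (n k : ℕ) : 0 ≤ Scr ℓ n k := Nat.cast_nonneg _

lemma Scr_le_pow (n k : ℕ) : Scr ℓ n k ≤ (ℓ:ℝ)^n := by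
  unfold Scr
  rw [← card_GG (ℓ := ℓ) (n := n), ← Finset.card_univ]
  exact_mod_cast Finset.card_filter_le _ _

lemma Scr_zero {k : ℕ} (hk : n < k) : Scr ℓ n k = 0 := by
  rw [Scr_eq, Nat.choose_eq_zero_of_lt hk]
  simp

lemma sphere_step (j : ℕ) :
    ((j:ℝ)+1) * Scr ℓ n (j+1) = ((n:ℝ) - j) * ((ℓ:ℝ)-1) * Scr ℓ n j := by
  rcases le_or_gt j n with hj | hj
  · rw [Scr_eq, Scr_eq]
    have h := Nat.choose_succ_right_eq n j
    have h2 : ((n.choose (j+1) * (j+1) : ℕ) : ℝ) = ((n.choose j * (n - j) : ℕ) : ℝ) := by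
      exact congrArg (Nat.cast : ℕ → ℝ) h
    push_cast [hj] at h2
    calc ((j:ℝ)+1) * ((n.choose (j+1) : ℝ) * ((ℓ:ℝ)-1)^(j+1))
        = ((n.choose (j+1) : ℝ) * ((j:ℝ)+1)) * ((ℓ:ℝ)-1)^(j+1) := by ring
      _ = ((n.choose j : ℝ) * ((n:ℝ) - j)) * ((ℓ:ℝ)-1)^(j+1) := by rw [h2]
      _ = ((n:ℝ) - j) * ((ℓ:ℝ)-1) * ((n.choose j : ℝ) * ((ℓ:ℝ)-1)^j) := by ring
  · rw [Scr_zero hj, Scr_zero (by omega)]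
    simp

lemma step_up (hℓ : 2 ≤ ℓ) {j : ℕ} {P s a : ℝ}
    (hP : P = (n:ℝ) * pVal ℓ) (hs : 0 ≤ s) (ha : a = 6*s*(ℓ:ℝ)/P)
    (hP4 : 4*s ≤ P) (hPpos : 0 < P)
    (hj1 : P - 2*s ≤ (j:ℝ)) :
    Scr ℓ n (j+1) ≤ (1+a) * Scr ℓ n j := by
  have hl2 : (2:ℝ) ≤ (ℓ:ℝ) := by exact_mod_cast hℓ
  have hℓ0 : (ℓ:ℝ) ≠ 0 := by linarith
  have hnl : (ℓ:ℝ)*P = (n:ℝ)*((ℓ:ℝ)-1) := by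
    rw [hP]; unfold pVal; field_simp
  have hj2 : P/2 ≤ (j:ℝ)+1 := by linarith
  have ha0 : 0 ≤ a := by rw [ha]; positivity
  have haP : a * (P/2) = 3*s*(ℓ:ℝ) := by rw [ha]; field_simp; ring
  have ha2 : 3*s*(ℓ:ℝ) ≤ a * ((j:ℝ)+1) := by
    rw [← haP]; exact mul_le_mul_of_nonneg_left hj2 ha0
  have hmul : (ℓ:ℝ)*(P - j) ≤ (ℓ:ℝ)*(2*s) := by
    apply mul_le_mul_of_nonneg_left (by linarith) (by linarith)
  have e : ((n:ℝ)-j)*((ℓ:ℝ)-1) = (ℓ:ℝ)*(P - j) + (j:ℝ) := by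
    linear_combination -hnl
  have hsl : 0 ≤ s*(ℓ:ℝ) := by positivity
  have key : ((n:ℝ)-j)*((ℓ:ℝ)-1) ≤ (1+a) * ((j:ℝ)+1) := by nlinarith
  have hj3 : (0:ℝ) < (j:ℝ)+1 := by positivity
  have h5 : ((j:ℝ)+1) * Scr ℓ n (j+1) ≤ ((j:ℝ)+1) * ((1+a) * Scr ℓ n j) := by
    rw [sphere_step j]
    nlinarith [mul_le_mul_of_nonneg_right key (Scr_nonneg (ℓ := ℓ) n j)]
  exact le_of_mul_le_mul_left h5 hj3

lemma step_down (hℓ : 2 ≤ ℓ) {j : ℕ} {P s a : ℝ}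
    (hP : P = (n:ℝ) * pVal ℓ) (hs : 0 ≤ s) (ha : a = 6*s*(ℓ:ℝ)/P)
    (hq4 : 4*s ≤ (n:ℝ) - P) (hPpos : 0 < P) (hsl1 : 1 ≤ s*(ℓ:ℝ))
    (hj2 : (j:ℝ) ≤ P + 2*s) :
    Scr ℓ n j ≤ (1+a) * Scr ℓ n (j+1) := by
  have hl2 : (2:ℝ) ≤ (ℓ:ℝ) := by exact_mod_cast hℓ
  have hℓ0 : (ℓ:ℝ) ≠ 0 := by linarith
  have hnl : (ℓ:ℝ)*P = (n:ℝ)*((ℓ:ℝ)-1) := by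
    rw [hP]; unfold pVal; field_simp
  have ha0 : 0 ≤ a := by rw [ha]; positivity
  have enP : ((n:ℝ) - P)*((ℓ:ℝ)-1) = P := by linear_combination -hnl
  have hnj : ((n:ℝ)-P)/2 ≤ (n:ℝ) - j := by linarith
  have hfac : P/2 ≤ ((n:ℝ)-j)*((ℓ:ℝ)-1) := by
    calc P/2 = (((n:ℝ)-P)/2)*((ℓ:ℝ)-1) := by linear_combination -enP/2
    _ ≤ ((n:ℝ)-j)*((ℓ:ℝ)-1) := by
        apply mul_le_mul_of_nonneg_right hnj (by linarith)
  have haP : a * (P/2) = 3*s*(ℓ:ℝ) := by rw [ha]; field_simp; ring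
  have ha2 : 3*s*(ℓ:ℝ) ≤ a * (((n:ℝ)-j)*((ℓ:ℝ)-1)) := by
    rw [← haP]; exact mul_le_mul_of_nonneg_left hfac ha0
  have e : ((n:ℝ)-j)*((ℓ:ℝ)-1) = (ℓ:ℝ)*(P - j) + (j:ℝ) := by
    linear_combination -hnl
  have hmul : (ℓ:ℝ)*(j - P) ≤ (ℓ:ℝ)*(2*s) := by
    apply mul_le_mul_of_nonneg_left (by linarith) (by linarith)
  have key : ((j:ℝ)+1) ≤ (1+a) * (((n:ℝ)-j)*((ℓ:ℝ)-1)) := by nlinarith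
  have hfpos : (0:ℝ) < ((n:ℝ)-j)*((ℓ:ℝ)-1) := by linarith
  have h5 : (((n:ℝ)-j)*((ℓ:ℝ)-1)) * Scr ℓ n j
      ≤ (((n:ℝ)-j)*((ℓ:ℝ)-1)) * ((1+a) * Scr ℓ n (j+1)) := by
    have hstep := sphere_step (ℓ := ℓ) (n := n) j
    have h6 : (((n:ℝ)-j)*((ℓ:ℝ)-1)) * Scr ℓ n j = ((j:ℝ)+1) * Scr ℓ n (j+1) := by
      rw [← hstep]
    rw [h6]
    nlinarith [mul_le_mul_of_nonneg_right key (Scr_nonneg (ℓ := ℓ) n (j+1))]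
  exact le_of_mul_le_mul_left h5 hfpos

lemma chain_up (hℓ : 2 ≤ ℓ) {P s a : ℝ}
    (hP : P = (n:ℝ) * pVal ℓ) (hs : 0 ≤ s) (ha : a = 6*s*(ℓ:ℝ)/P)
    (hP4 : 4*s ≤ P) (hPpos : 0 < P)
    (d m : ℕ) (hm1 : P - 2*s ≤ (m:ℝ)) :
    Scr ℓ n (m+d) ≤ (1+a)^d * Scr ℓ n m := by
  have ha0 : 0 ≤ a := by rw [ha]; positivity
  induction d with
  | zero => simp
  | succ d ih =>
    have hj1 : P - 2*s ≤ ((m+d : ℕ):ℝ) := by push_cast; linarith [Nat.cast_nonneg (α := ℝ) d]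
    calc Scr ℓ n (m+(d+1)) = Scr ℓ n ((m+d)+1) := by ring_nf
      _ ≤ (1+a) * Scr ℓ n (m+d) := step_up hℓ hP hs ha hP4 hPpos hj1
      _ ≤ (1+a) * ((1+a)^d * Scr ℓ n m) := by
          apply mul_le_mul_of_nonneg_left ih (by linarith)
      _ = (1+a)^(d+1) * Scr ℓ n m := by ring

lemma chain_down (hℓ : 2 ≤ ℓ) {P s a : ℝ}
    (hP : P = (n:ℝ) * pVal ℓ) (hs : 0 ≤ s) (ha : a = 6*s*(ℓ:ℝ)/P)
    (hq4 : 4*s ≤ (n:ℝ) - P) (hPpos : 0 < P) (hsl1 : 1 ≤ s*(ℓ:ℝ))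
    (d m : ℕ) (hm2 : (m:ℝ) + d ≤ P + 2*s + 1) :
    Scr ℓ n m ≤ (1+a)^d * Scr ℓ n (m+d) := by
  have ha0 : 0 ≤ a := by rw [ha]; positivity
  induction d with
  | zero => simp
  | succ d ih =>
    have hm2' : (m:ℝ) + d ≤ P + 2*s + 1 := by push_cast at hm2 ⊢; linarith
    have hj2 : ((m+d : ℕ):ℝ) ≤ P + 2*s := by push_cast at hm2 ⊢; linarith
    calc Scr ℓ n m ≤ (1+a)^d * Scr ℓ n (m+d) := ih hm2'
      _ ≤ (1+a)^d * ((1+a) * Scr ℓ n ((m+d)+1)) := by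
          apply mul_le_mul_of_nonneg_left
            (step_down hℓ hP hs ha hq4 hPpos hsl1 hj2) (by positivity)
      _ = (1+a)^(d+1) * Scr ℓ n (m+(d+1)) := by
          rw [show m+(d+1) = (m+d)+1 by ring]; ring

lemma Scr_one_le (hℓ : 2 ≤ ℓ) {k : ℕ} (hk : k ≤ n) : 1 ≤ Scr ℓ n k := by
  have := sphere_card_pos (n := n) hℓ hk
  unfold Scr
  exact_mod_cast this

set_option maxHeartbeats 2000000 in
lemma sphere_ratio (hℓ : 2 ≤ ℓ) (hn : 1 ≤ n) {m m' : ℕ}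
    (hm : m ∈ setI ℓ n) (hm' : m' ∈ setI ℓ n) :
    Scr ℓ n m ≤ ((ℓ:ℝ)^(16*ℓ^2) + Real.exp 24) * Scr ℓ n m' := by
  have hl2 : (2:ℝ) ≤ (ℓ:ℝ) := by exact_mod_cast hℓ
  have hl1 : (1:ℝ) ≤ (ℓ:ℝ) := by linarith
  obtain ⟨hmn, hmabs⟩ := mem_setI.mp hm
  obtain ⟨hmn', hmabs'⟩ := mem_setI.mp hm'
  rcases lt_or_ge n (16*ℓ^2) with hsmall | hbig
  · have h1 : Scr ℓ n m ≤ (ℓ:ℝ)^(16*ℓ^2) :=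
      le_trans (Scr_le_pow n m) (pow_le_pow_right₀ hl1 hsmall.le)
    have h2 : 1 ≤ Scr ℓ n m' := Scr_one_le hℓ hmn'
    have h3 : 0 ≤ Real.exp 24 * Scr ℓ n m' :=
      mul_nonneg (Real.exp_pos 24).le (Scr_nonneg n m')
    calc Scr ℓ n m ≤ (ℓ:ℝ)^(16*ℓ^2) := h1
      _ = (ℓ:ℝ)^(16*ℓ^2) * 1 := by ring
      _ ≤ (ℓ:ℝ)^(16*ℓ^2) * Scr ℓ n m' := by
          apply mul_le_mul_of_nonneg_left h2 (by positivity)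
      _ ≤ ((ℓ:ℝ)^(16*ℓ^2) + Real.exp 24) * Scr ℓ n m' := by nlinarith
  · set P := (n:ℝ) * pVal ℓ with hP
    set s := Real.sqrt ((n:ℝ) * pVal ℓ * (1 - pVal ℓ)) with hsdef
    have hℓ0 : (ℓ:ℝ) ≠ 0 := by linarith
    have hq : 1 - pVal ℓ = 1/(ℓ:ℝ) := one_sub_pVal
    have hnbig : (16:ℝ)*(ℓ:ℝ)^2 ≤ (n:ℝ) := by exact_mod_cast hbig
    have hPval : P = (n:ℝ)*(((ℓ:ℝ)-1)/ℓ) := hP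
    have hPl : P * (ℓ:ℝ) = (n:ℝ)*((ℓ:ℝ)-1) := by
      rw [hPval]; field_simp
    have hnP : ((n:ℝ) - P)*(ℓ:ℝ) = (n:ℝ) := by
      rw [hPval]; field_simp; ring
    have hPpos : 0 < P := by
      rw [hPval]
      apply mul_pos (by nlinarith) (div_pos (by linarith) (by linarith))
    have hs0 : 0 ≤ s := Real.sqrt_nonneg _
    have hs2 : s^2 = P * (1/(ℓ:ℝ)) := by
      rw [hsdef, Real.sq_sqrt (by rw [hq]; positivity), hq]
    have hs2' : s^2*(ℓ:ℝ) = P := by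
      rw [hs2]; field_simp
    have hP16 : 16*(ℓ:ℝ) ≤ P := by nlinarith
    have hPl64 : 64 ≤ P*(ℓ:ℝ) := by nlinarith
    have hslsq : (s*(ℓ:ℝ))^2 = P*(ℓ:ℝ) := by
      rw [mul_pow]; linear_combination (ℓ:ℝ)*hs2'
    have hsl0 : 0 ≤ s*(ℓ:ℝ) := mul_nonneg hs0 (by linarith)
    have hsl1 : 1 ≤ s*(ℓ:ℝ) := by
      have h1 : (1:ℝ)^2 ≤ (s*(ℓ:ℝ))^2 := by rw [hslsq]; nlinarith
      exact (pow_le_pow_iff_left₀ (by norm_num) hsl0 (by norm_num)).mp h1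
    have hP4 : 4*s ≤ P := by
      have he : ((P:ℝ)^2 - (4*s)^2)*(ℓ:ℝ) = P*(P*(ℓ:ℝ) - 16) := by
        linear_combination (-16:ℝ)*hs2'
      have h0 : 0 ≤ P*(P*(ℓ:ℝ) - 16) := mul_nonneg hPpos.le (by linarith)
      have h1 : (4*s)^2 ≤ P^2 := by nlinarith
      exact (pow_le_pow_iff_left₀ (by positivity) hPpos.le (by norm_num)).mp h1
    have hq4 : 4*s ≤ (n:ℝ) - P := by
      have hNpos : 0 < (n:ℝ) - P := by nlinarith
      have hNsq : (((n:ℝ) - P)*(ℓ:ℝ))^2 = (n:ℝ)^2 := by rw [hnP]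
      have h16 : 16*((ℓ:ℝ)-1) ≤ (n:ℝ) := by nlinarith
      have he : (((n:ℝ) - P)^2 - (4*s)^2)*(ℓ:ℝ)^2 = (n:ℝ)^2 - 16*((n:ℝ)*((ℓ:ℝ)-1)) := by
        linear_combination hNsq - 16*(ℓ:ℝ)*hs2' - 16*hPl
      have h0 : (0:ℝ) ≤ (n:ℝ)^2 - 16*((n:ℝ)*((ℓ:ℝ)-1)) := by nlinarith
      have h1 : (4*s)^2 ≤ ((n:ℝ) - P)^2 := by nlinarith
      exact (pow_le_pow_iff_left₀ (by positivity) hNpos.le (by norm_num)).mp h1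
    set a := 6*s*(ℓ:ℝ)/P with ha
    have ha0 : 0 ≤ a := by rw [ha]; positivity
    have h4sa : 4*s*a = 24 := by
      rw [ha]; field_simp; linear_combination 24*hs2'
    have powb : ∀ d : ℕ, (d:ℝ) ≤ 4*s → (1+a)^d ≤ Real.exp 24 := by
      intro d hd
      calc (1+a)^d ≤ (Real.exp a)^d := by
            apply pow_le_pow_left₀ (by linarith) (by linarith [Real.add_one_le_exp a])
        _ = Real.exp (d*a) := by rw [← Real.exp_nat_mul]
        _ ≤ Real.exp 24 := by
            apply Real.exp_le_exp.mpr
            calc (d:ℝ)*a ≤ (4*s)*a := mul_le_mul_of_nonneg_right hd ha0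
              _ = 24 := h4sa
    obtain ⟨hm1, hm2⟩ := abs_lt.mp hmabs
    obtain ⟨hm1', hm2'⟩ := abs_lt.mp hmabs'
    have main : Scr ℓ n m ≤ Real.exp 24 * Scr ℓ n m' := by
      rcases le_total m' m with h | h
      · have hd : m' + (m - m') = m := by omega
        have hdc : ((m - m' : ℕ):ℝ) ≤ 4*s := by
          rw [Nat.cast_sub h]; linarith
        calc Scr ℓ n m = Scr ℓ n (m' + (m - m')) := by rw [hd]
          _ ≤ (1+a)^(m - m') * Scr ℓ n m' := by
              apply chain_up hℓ hP hs0 ha hP4 hPpos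
              linarith
          _ ≤ Real.exp 24 * Scr ℓ n m' := by
              apply mul_le_mul_of_nonneg_right (powb _ hdc) (Scr_nonneg n m')
      · have hd : m + (m' - m) = m' := by omega
        have hdc : ((m' - m : ℕ):ℝ) ≤ 4*s := by
          rw [Nat.cast_sub h]; linarith
        calc Scr ℓ n m ≤ (1+a)^(m' - m) * Scr ℓ n (m + (m' - m)) := by
              apply chain_down hℓ hP hs0 ha hq4 hPpos hsl1
              have he : ((m + (m' - m) : ℕ):ℝ) = (m':ℝ) := by
                rw [hd]
              push_cast at he ⊢
              linarith
          _ = (1+a)^(m' - m) * Scr ℓ n m' := by rw [hd]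
          _ ≤ Real.exp 24 * Scr ℓ n m' := by
              apply mul_le_mul_of_nonneg_right (powb _ hdc) (Scr_nonneg n _)
    have hpowpos : (0:ℝ) < (ℓ:ℝ)^(16*ℓ^2) := by positivity
    nlinarith [Scr_nonneg (ℓ := ℓ) n m']

noncomputable def Tfun (ℓ n : ℕ) [NeZero ℓ] (f : Equiv.Perm (GG ℓ n) → ℝ)
    (z : GG ℓ n) : ℝ :=
  ∑ σ : Equiv.Perm (GG ℓ n), ∑ x : GG ℓ n, (f (σ * Equiv.swap x (x + z)) - f σ)^2

lemma Tfun_nonneg (f : Equiv.Perm (GG ℓ n) → ℝ) (z : GG ℓ n) : 0 ≤ Tfun ℓ n f z := by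
  unfold Tfun
  apply Finset.sum_nonneg; intro σ _
  apply Finset.sum_nonneg; intro x _
  positivity

lemma comm3 (A : Equiv.Perm (GG ℓ n) → GG ℓ n → GG ℓ n → ℝ) :
    ∑ σ : Equiv.Perm (GG ℓ n), ∑ x : GG ℓ n, ∑ z : GG ℓ n, A σ x z
      = ∑ z : GG ℓ n, ∑ σ : Equiv.Perm (GG ℓ n), ∑ x : GG ℓ n, A σ x z := by
  calc ∑ σ : Equiv.Perm (GG ℓ n), ∑ x : GG ℓ n, ∑ z : GG ℓ n, A σ x z
      = ∑ σ : Equiv.Perm (GG ℓ n), ∑ z : GG ℓ n, ∑ x : GG ℓ n, A σ x z :=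
        Finset.sum_congr rfl (fun σ _ => Finset.sum_comm)
    _ = ∑ z : GG ℓ n, ∑ σ : Equiv.Perm (GG ℓ n), ∑ x : GG ℓ n, A σ x z := Finset.sum_comm

lemma sum3_eq (μ : GG ℓ n → ℝ) (f : Equiv.Perm (GG ℓ n) → ℝ) :
    ∑ σ : Equiv.Perm (GG ℓ n), ∑ x : GG ℓ n, ∑ z : GG ℓ n,
      μ z * (f (σ * Equiv.swap x (x + z)) - f σ)^2
    = ∑ z : GG ℓ n, μ z * Tfun ℓ n f z := by
  rw [comm3]
  apply Finset.sum_congr rfl; intro z _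
  unfold Tfun
  rw [Finset.mul_sum]
  apply Finset.sum_congr rfl; intro σ _
  rw [Finset.mul_sum]

lemma T2_eq (f : Equiv.Perm (GG ℓ n) → ℝ) (w v : GG ℓ n) :
    ∑ σ : Equiv.Perm (GG ℓ n), ∑ x : GG ℓ n,
      (f ((σ * Equiv.swap x (x+w)) * Equiv.swap (x+w) ((x+w)+v))
        - f (σ * Equiv.swap x (x+w)))^2
    = Tfun ℓ n f v := by
  rw [Finset.sum_comm]
  have step1 : ∀ x : GG ℓ n,
      ∑ σ : Equiv.Perm (GG ℓ n),
        (f ((σ * Equiv.swap x (x+w)) * Equiv.swap (x+w) ((x+w)+v))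
          - f (σ * Equiv.swap x (x+w)))^2
      = ∑ σ : Equiv.Perm (GG ℓ n),
        (f (σ * Equiv.swap (x+w) ((x+w)+v)) - f σ)^2 := by
    intro x
    exact Fintype.sum_equiv (Equiv.mulRight (Equiv.swap x (x+w)))
      _ _ (fun σ => rfl)
  rw [Finset.sum_congr rfl (fun x _ => step1 x)]
  have step2 : ∑ x : GG ℓ n, ∑ σ : Equiv.Perm (GG ℓ n),
      (f (σ * Equiv.swap (x+w) ((x+w)+v)) - f σ)^2
      = ∑ y : GG ℓ n, ∑ σ : Equiv.Perm (GG ℓ n),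
      (f (σ * Equiv.swap y (y+v)) - f σ)^2 := by
    exact Fintype.sum_equiv (Equiv.addRight w) _ _ (fun x => rfl)
  rw [step2]
  unfold Tfun
  exact Finset.sum_comm

lemma T3_eq (f : Equiv.Perm (GG ℓ n) → ℝ) (w v : GG ℓ n) :
    ∑ σ : Equiv.Perm (GG ℓ n), ∑ x : GG ℓ n,
      (f (((σ * Equiv.swap x (x+w)) * Equiv.swap (x+w) ((x+w)+v)) * Equiv.swap x (x+w))
        - f ((σ * Equiv.swap x (x+w)) * Equiv.swap (x+w) ((x+w)+v)))^2
    = Tfun ℓ n f w := by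
  rw [Finset.sum_comm]
  have step1 : ∀ x : GG ℓ n,
      ∑ σ : Equiv.Perm (GG ℓ n),
        (f (((σ * Equiv.swap x (x+w)) * Equiv.swap (x+w) ((x+w)+v)) * Equiv.swap x (x+w))
          - f ((σ * Equiv.swap x (x+w)) * Equiv.swap (x+w) ((x+w)+v)))^2
      = ∑ σ : Equiv.Perm (GG ℓ n),
        (f (σ * Equiv.swap x (x+w)) - f σ)^2 := by
    intro x
    apply Fintype.sum_equiv
      (Equiv.mulRight (Equiv.swap x (x+w) * Equiv.swap (x+w) ((x+w)+v)))
    intro σ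
    simp only [Equiv.coe_mulRight, mul_assoc]
  rw [Finset.sum_congr rfl (fun x _ => step1 x)]
  unfold Tfun
  exact Finset.sum_comm

end Helpers



section Helpers2
variable {ℓ n : ℕ} [NeZero ℓ]

lemma point_ineq (f : Equiv.Perm (GG ℓ n) → ℝ) (σ : Equiv.Perm (GG ℓ n)) (x w v : GG ℓ n) :
    (f (σ * Equiv.swap x (x + (w + v))) - f σ)^2
    ≤ 3 * ((f (σ * Equiv.swap x (x+w)) - f σ)^2
      + (f ((σ * Equiv.swap x (x+w)) * Equiv.swap (x+w) ((x+w)+v))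
          - f (σ * Equiv.swap x (x+w)))^2
      + (f (((σ * Equiv.swap x (x+w)) * Equiv.swap (x+w) ((x+w)+v)) * Equiv.swap x (x+w))
          - f ((σ * Equiv.swap x (x+w)) * Equiv.swap (x+w) ((x+w)+v)))^2) := by
  by_cases hv : v = 0
  · subst hv
    simp only [add_zero, Equiv.swap_self]
    rw [← Equiv.Perm.one_def, mul_one, Equiv.mul_swap_mul_self]
    nlinarith [sq_nonneg (f (σ * Equiv.swap x (x+w)) - f σ),
      sq_nonneg (f σ - f (σ * Equiv.swap x (x+w))), sq_nonneg (f (σ * Equiv.swap x (x+w)) - f (σ * Equiv.swap x (x+w)))]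
  · by_cases hwv : w + v = 0
    · rw [hwv, add_zero, Equiv.swap_self, ← Equiv.Perm.one_def, mul_one, sub_self]
      have h0 : (0:ℝ)^2 = 0 := by norm_num
      rw [h0]
      positivity
    · have hx1 : x + (w + v) ≠ x := by
        intro h
        exact hwv (by simpa using h)
      have hx2 : x + (w + v) ≠ x + w := by
        intro h
        rw [← add_assoc] at h
        exact hv (by simpa using h)
      have hiden : Equiv.swap x (x + (w+v)) =
          Equiv.swap x (x+w) * Equiv.swap (x+w) ((x+w)+v) * Equiv.swap x (x+w) := by
        have h3 : (x+w)+v = x+(w+v) := add_assoc x w v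
        rw [h3, Equiv.swap_comm x (x+w), Equiv.swap_comm (x+w) (x+(w+v))]
        exact (Equiv.swap_mul_swap_mul_swap hx2 hx1).symm
      rw [hiden, ← mul_assoc, ← mul_assoc]
      set A := f (σ * Equiv.swap x (x+w)) - f σ with hA
      set B := f ((σ * Equiv.swap x (x+w)) * Equiv.swap (x+w) ((x+w)+v))
          - f (σ * Equiv.swap x (x+w)) with hB
      set C := f (((σ * Equiv.swap x (x+w)) * Equiv.swap (x+w) ((x+w)+v)) * Equiv.swap x (x+w))
          - f ((σ * Equiv.swap x (x+w)) * Equiv.swap (x+w) ((x+w)+v)) with hC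
      have hsum : f (((σ * Equiv.swap x (x+w)) * Equiv.swap (x+w) ((x+w)+v)) * Equiv.swap x (x+w))
          - f σ = A + B + C := by
        rw [hA, hB, hC]; ring
      rw [hsum]
      nlinarith [sq_nonneg (A - B), sq_nonneg (B - C), sq_nonneg (A - C)]

lemma tsum_conv_le (μ ν : GG ℓ n → ℝ) (hμ0 : ∀ z, 0 ≤ μ z) (hν0 : ∀ z, 0 ≤ ν z)
    (hμ1 : ∑ z : GG ℓ n, μ z = 1) (hν1 : ∑ z : GG ℓ n, ν z = 1)
    (f : Equiv.Perm (GG ℓ n) → ℝ) :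
    ∑ z : GG ℓ n, conv μ ν z * Tfun ℓ n f z
    ≤ ∑ z : GG ℓ n, (6 * μ z + 3 * ν z) * Tfun ℓ n f z := by
  have key : ∀ w v : GG ℓ n,
      Tfun ℓ n f (w + v) ≤ 3 * (2 * Tfun ℓ n f w + Tfun ℓ n f v) := by
    intro w v
    have h1 : Tfun ℓ n f (w+v) ≤
        3 * ((∑ σ : Equiv.Perm (GG ℓ n), ∑ x : GG ℓ n,
            (f (σ * Equiv.swap x (x+w)) - f σ)^2)
          + (∑ σ : Equiv.Perm (GG ℓ n), ∑ x : GG ℓ n,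
            (f ((σ * Equiv.swap x (x+w)) * Equiv.swap (x+w) ((x+w)+v))
              - f (σ * Equiv.swap x (x+w)))^2)
          + (∑ σ : Equiv.Perm (GG ℓ n), ∑ x : GG ℓ n,
            (f (((σ * Equiv.swap x (x+w)) * Equiv.swap (x+w) ((x+w)+v)) * Equiv.swap x (x+w))
              - f ((σ * Equiv.swap x (x+w)) * Equiv.swap (x+w) ((x+w)+v)))^2)) := by
      unfold Tfun
      rw [← Finset.sum_add_distrib, ← Finset.sum_add_distrib, Finset.mul_sum]
      apply Finset.sum_le_sum; intro σ _
      rw [← Finset.sum_add_distrib, ← Finset.sum_add_distrib, Finset.mul_sum]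
      apply Finset.sum_le_sum; intro x _
      exact point_ineq f σ x w v
    rw [T2_eq, T3_eq] at h1
    show Tfun ℓ n f (w + v) ≤ 3 * (2 * Tfun ℓ n f w + Tfun ℓ n f v)
    unfold Tfun at h1 ⊢
    linarith
  -- expand conv
  have expand : ∑ z : GG ℓ n, conv μ ν z * Tfun ℓ n f z
      = ∑ w : GG ℓ n, ∑ v : GG ℓ n, μ w * ν v * Tfun ℓ n f (w + v) := by
    unfold conv
    calc ∑ z : GG ℓ n, (∑ w : GG ℓ n, μ w * ν (z - w)) * Tfun ℓ n f z
        = ∑ z : GG ℓ n, ∑ w : GG ℓ n, μ w * ν (z - w) * Tfun ℓ n f z := by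
          apply Finset.sum_congr rfl; intro z _; rw [Finset.sum_mul]
      _ = ∑ w : GG ℓ n, ∑ z : GG ℓ n, μ w * ν (z - w) * Tfun ℓ n f z := Finset.sum_comm
      _ = ∑ w : GG ℓ n, ∑ v : GG ℓ n, μ w * ν v * Tfun ℓ n f (w + v) := by
          apply Finset.sum_congr rfl; intro w _
          exact (Fintype.sum_equiv (Equiv.addLeft w)
            (fun v => μ w * ν v * Tfun ℓ n f (w + v))
            (fun z => μ w * ν (z - w) * Tfun ℓ n f z)
            (fun v => by simp)).symm
  rw [expand]
  have step : ∑ w : GG ℓ n, ∑ v : GG ℓ n, μ w * ν v * Tfun ℓ n f (w + v)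
      ≤ ∑ w : GG ℓ n, ∑ v : GG ℓ n, μ w * ν v * (3 * (2 * Tfun ℓ n f w + Tfun ℓ n f v)) := by
    apply Finset.sum_le_sum; intro w _
    apply Finset.sum_le_sum; intro v _
    apply mul_le_mul_of_nonneg_left (key w v) (mul_nonneg (hμ0 w) (hν0 v))
  refine le_trans step (le_of_eq ?_)
  set S := ∑ v : GG ℓ n, ν v * Tfun ℓ n f v with hS
  have e1 : ∀ w : GG ℓ n, ∑ v : GG ℓ n, μ w * ν v * (3 * (2 * Tfun ℓ n f w + Tfun ℓ n f v))
      = 6 * μ w * Tfun ℓ n f w + 3 * μ w * S := by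
    intro w
    have h : ∀ v : GG ℓ n, μ w * ν v * (3 * (2 * Tfun ℓ n f w + Tfun ℓ n f v))
        = (6 * μ w * Tfun ℓ n f w) * ν v + (3 * μ w) * (ν v * Tfun ℓ n f v) := by
      intro v; ring
    rw [Finset.sum_congr rfl (fun v _ => h v), Finset.sum_add_distrib,
      ← Finset.mul_sum, ← Finset.mul_sum, hν1, mul_one, ← hS]
  rw [Finset.sum_congr rfl (fun w _ => e1 w), Finset.sum_add_distrib]
  have e2 : ∑ w : GG ℓ n, 3 * μ w * S = 3 * S := by
    have h : ∀ w : GG ℓ n, 3 * μ w * S = (3 * S) * μ w := fun w => by ring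
    rw [Finset.sum_congr rfl (fun w _ => h w), ← Finset.mul_sum, hμ1, mul_one]
  rw [e2]
  have e3 : ∀ z : GG ℓ n, (6 * μ z + 3 * ν z) * Tfun ℓ n f z
      = 6 * μ z * Tfun ℓ n f z + 3 * (ν z * Tfun ℓ n f z) := fun z => by ring
  rw [Finset.sum_congr rfl (fun z _ => e3 z), Finset.sum_add_distrib, ← Finset.mul_sum, ← hS]

lemma sum_Scr_le (hℓ : 2 ≤ ℓ) : ∑ k ∈ setI ℓ n, Scr ℓ n k ≤ (ℓ:ℝ)^n := by
  classical
  have h : ∑ k ∈ setI ℓ n, ((Finset.univ.filter fun y : GG ℓ n => suppCard y = k).card)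
      ≤ (Finset.univ : Finset (GG ℓ n)).card := by
    rw [← Finset.card_biUnion]
    · apply Finset.card_le_card
      intro v _
      simp
    · intro a _ b _ hab
      apply Finset.disjoint_left.mpr
      intro y hy1 hy2
      simp only [Finset.mem_filter] at hy1 hy2
      exact hab (hy1.2 ▸ hy2.2 ▸ rfl)
  have h2 : ((Finset.univ : Finset (GG ℓ n)).card : ℝ) = (ℓ:ℝ)^n := by
    rw [Finset.card_univ]; exact card_GG
  unfold Scr
  rw [← h2]
  exact_mod_cast h

lemma rhoI_eq {v : GG ℓ n} (hv : suppCard v ∈ setI ℓ n) :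
    rhoI ℓ n v = (1/((setI ℓ n).card : ℝ)) * (1 / Scr ℓ n (suppCard v)) := by
  unfold rhoI
  congr 1
  rw [Finset.sum_eq_single (suppCard v)]
  · unfold rho Scr; simp
  · intro k _ hk
    unfold rho
    rw [if_neg (fun h => hk h.symm)]
  · intro h; exact absurd hv h

lemma rhoI_lower (hℓ : 2 ≤ ℓ) (hn : 1 ≤ n) {v : GG ℓ n}
    (hv : suppCard v ∈ setI ℓ n) :
    1/(((ℓ:ℝ)^(16*ℓ^2) + Real.exp 24)^2 * (ℓ:ℝ)^n) ≤ rhoI ℓ n v := by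
  set K := (ℓ:ℝ)^(16*ℓ^2) + Real.exp 24 with hK
  have hl1 : (1:ℝ) ≤ (ℓ:ℝ) := by
    have : (2:ℝ) ≤ (ℓ:ℝ) := by exact_mod_cast hℓ
    linarith
  have hK1 : 1 ≤ K := by
    have hpow : (1:ℝ) ≤ (ℓ:ℝ)^(16*ℓ^2) := one_le_pow₀ hl1
    have := Real.exp_pos (24:ℝ)
    rw [hK]; linarith
  have hmstar : (n - n/ℓ) ∈ setI ℓ n := ceil_mem_setI hℓ hn
  have hSm : 0 < Scr ℓ n (n - n/ℓ) := Scr_pos hℓ (Nat.sub_le _ _)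
  have hcK : ((setI ℓ n).card : ℝ) * Scr ℓ n (n - n/ℓ) ≤ K * (ℓ:ℝ)^n := by
    calc ((setI ℓ n).card : ℝ) * Scr ℓ n (n - n/ℓ)
        = ∑ _k ∈ setI ℓ n, Scr ℓ n (n - n/ℓ) := by
          rw [Finset.sum_const, nsmul_eq_mul]
      _ ≤ ∑ k ∈ setI ℓ n, K * Scr ℓ n k := by
          apply Finset.sum_le_sum
          intro k hk
          exact sphere_ratio hℓ hn hmstar hk
      _ = K * ∑ k ∈ setI ℓ n, Scr ℓ n k := by rw [← Finset.mul_sum]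
      _ ≤ K * (ℓ:ℝ)^n := by
          apply mul_le_mul_of_nonneg_left (sum_Scr_le hℓ) (by linarith)
  have hSv : Scr ℓ n (suppCard v) ≤ K * Scr ℓ n (n - n/ℓ) :=
    sphere_ratio hℓ hn hv hmstar
  have hcSv : ((setI ℓ n).card : ℝ) * Scr ℓ n (suppCard v) ≤ K^2 * (ℓ:ℝ)^n := by
    calc ((setI ℓ n).card : ℝ) * Scr ℓ n (suppCard v)
        ≤ ((setI ℓ n).card : ℝ) * (K * Scr ℓ n (n - n/ℓ)) := by
          apply mul_le_mul_of_nonneg_left hSv (by positivity)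
      _ = K * (((setI ℓ n).card : ℝ) * Scr ℓ n (n - n/ℓ)) := by ring
      _ ≤ K * (K * (ℓ:ℝ)^n) := by
          apply mul_le_mul_of_nonneg_left hcK (by linarith)
      _ = K^2 * (ℓ:ℝ)^n := by ring
  rw [rhoI_eq hv]
  have hc0 : (0:ℝ) < ((setI ℓ n).card : ℝ) := by
    exact_mod_cast card_setI_pos hℓ hn
  have hS0 : (0:ℝ) < Scr ℓ n (suppCard v) := Scr_pos hℓ (mem_setI.mp hv).1
  rw [div_mul_div_comm, one_mul]
  exact one_div_le_one_div_of_le (by positivity) hcSv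

lemma unif_le_conv (hℓ : 2 ≤ ℓ) (hn : 1 ≤ n) (w : GG ℓ n) :
    unifG ℓ n w ≤ (2*((ℓ:ℝ)^(16*ℓ^2) + Real.exp 24)^4)
      * conv (rhoI ℓ n) (rhoI ℓ n) w := by
  classical
  set K := (ℓ:ℝ)^(16*ℓ^2) + Real.exp 24 with hK
  have hl1 : (0:ℝ) < (ℓ:ℝ) := by
    have : (2:ℝ) ≤ (ℓ:ℝ) := by exact_mod_cast hℓ
    linarith
  have hKpos : 0 < K := by rw [hK]; positivity
  set a := 1/(K^2 * (ℓ:ℝ)^n) with ha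
  have ha0 : 0 ≤ a := by rw [ha]; positivity
  set good := Finset.univ.filter fun v : GG ℓ n =>
    suppCard v ∈ setI ℓ n ∧ suppCard (w - v) ∈ setI ℓ n with hgood
  have h1 : ∀ v ∈ good, a^2 ≤ rhoI ℓ n v * rhoI ℓ n (w - v) := by
    intro v hv
    rw [hgood, Finset.mem_filter] at hv
    have b1 := rhoI_lower hℓ hn hv.2.1
    have b2 := rhoI_lower hℓ hn hv.2.2
    rw [← hK] at b1 b2
    calc a^2 = a * a := sq a
      _ ≤ rhoI ℓ n v * rhoI ℓ n (w - v) := by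
          apply mul_le_mul (by rw [ha]; exact b1) (by rw [ha]; exact b2)
            ha0 (le_trans ha0 (by rw [ha]; exact b1))
  have hconv : 1/(2*K^4*(ℓ:ℝ)^n) ≤ conv (rhoI ℓ n) (rhoI ℓ n) w := by
    calc 1/(2*K^4*(ℓ:ℝ)^n) = ((ℓ:ℝ)^n/2) * a^2 := by
          rw [ha]; field_simp
      _ ≤ (good.card : ℝ) * a^2 := by
          apply mul_le_mul_of_nonneg_right _ (sq_nonneg a)
          exact good_count hℓ hn w
      _ = ∑ _v ∈ good, a^2 := by rw [Finset.sum_const, nsmul_eq_mul]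
      _ ≤ ∑ v ∈ good, rhoI ℓ n v * rhoI ℓ n (w - v) := Finset.sum_le_sum h1
      _ ≤ ∑ v : GG ℓ n, rhoI ℓ n v * rhoI ℓ n (w - v) := by
          apply Finset.sum_le_sum_of_subset_of_nonneg (Finset.subset_univ _)
          intro v _ _
          exact mul_nonneg (rhoI_nonneg v) (rhoI_nonneg (w - v))
      _ = conv (rhoI ℓ n) (rhoI ℓ n) w := rfl
  have hunif : unifG ℓ n w = 1/(ℓ:ℝ)^n := by
    unfold unifG; rw [card_GG]
  rw [hunif]
  calc (1:ℝ)/(ℓ:ℝ)^n = (2*K^4) * (1/(2*K^4*(ℓ:ℝ)^n)) := by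
        field_simp
    _ ≤ (2*K^4) * conv (rhoI ℓ n) (rhoI ℓ n) w := by
        apply mul_le_mul_of_nonneg_left hconv (by positivity)

end Helpers2

theorem stmt14 (ℓ : ℕ) [NeZero ℓ] (hℓ : 2 ≤ ℓ) :
    ∃ C : ℝ, 0 < C ∧ ∀ n : ℕ, 1 ≤ n →
      ∀ f : Equiv.Perm (GG ℓ n) → ℝ,
        ipFormG ℓ n (unifG ℓ n) f ≤ C * ipFormG ℓ n (rhoI ℓ n) f := by
  refine ⟨18*((ℓ:ℝ)^(16*ℓ^2) + Real.exp 24)^4, by positivity, ?_⟩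
  intro n hn f
  set K := (ℓ:ℝ)^(16*ℓ^2) + Real.exp 24 with hK
  have hKpos : 0 < K := by rw [hK]; positivity
  have hρ0 : ∀ z : GG ℓ n, 0 ≤ rhoI ℓ n z := rhoI_nonneg
  have hρ1 : ∑ z : GG ℓ n, rhoI ℓ n z = 1 := sum_rhoI hℓ hn
  unfold ipFormG
  rw [sum3_eq, sum3_eq]
  set c₀ := 1 / (2 * ((Fintype.card (GG ℓ n)).factorial : ℝ)) with hc₀def
  have hc₀ : (0:ℝ) ≤ c₀ := by rw [hc₀def]; positivity
  have step1 : ∑ z : GG ℓ n, unifG ℓ n z * Tfun ℓ n f z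
      ≤ ∑ z : GG ℓ n, ((2*K^4) * conv (rhoI ℓ n) (rhoI ℓ n) z) * Tfun ℓ n f z := by
    apply Finset.sum_le_sum
    intro z _
    apply mul_le_mul_of_nonneg_right _ (Tfun_nonneg f z)
    rw [hK]
    exact unif_le_conv hℓ hn z
  have e1 : ∑ z : GG ℓ n, ((2*K^4) * conv (rhoI ℓ n) (rhoI ℓ n) z) * Tfun ℓ n f z
      = (2*K^4) * ∑ z : GG ℓ n, conv (rhoI ℓ n) (rhoI ℓ n) z * Tfun ℓ n f z := by
    rw [Finset.mul_sum]
    apply Finset.sum_congr rfl; intro z _; ring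
  have step2 : ∑ z : GG ℓ n, conv (rhoI ℓ n) (rhoI ℓ n) z * Tfun ℓ n f z
      ≤ ∑ z : GG ℓ n, (6 * rhoI ℓ n z + 3 * rhoI ℓ n z) * Tfun ℓ n f z :=
    tsum_conv_le (rhoI ℓ n) (rhoI ℓ n) hρ0 hρ0 hρ1 hρ1 f
  have e2 : ∑ z : GG ℓ n, (6 * rhoI ℓ n z + 3 * rhoI ℓ n z) * Tfun ℓ n f z
      = 9 * ∑ z : GG ℓ n, rhoI ℓ n z * Tfun ℓ n f z := by
    rw [Finset.mul_sum]
    apply Finset.sum_congr rfl; intro z _; ring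
  have step2' : ∑ z : GG ℓ n, conv (rhoI ℓ n) (rhoI ℓ n) z * Tfun ℓ n f z
      ≤ 9 * ∑ z : GG ℓ n, rhoI ℓ n z * Tfun ℓ n f z := by rw [← e2]; exact step2
  have hTnn : 0 ≤ ∑ z : GG ℓ n, rhoI ℓ n z * Tfun ℓ n f z := by
    apply Finset.sum_nonneg
    intro z _
    exact mul_nonneg (hρ0 z) (Tfun_nonneg f z)
  calc c₀ * ∑ z : GG ℓ n, unifG ℓ n z * Tfun ℓ n f z
      ≤ c₀ * ∑ z : GG ℓ n, ((2*K^4) * conv (rhoI ℓ n) (rhoI ℓ n) z) * Tfun ℓ n f z :=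
        mul_le_mul_of_nonneg_left step1 hc₀
    _ = (2*K^4) * (c₀ * ∑ z : GG ℓ n, conv (rhoI ℓ n) (rhoI ℓ n) z * Tfun ℓ n f z) := by
        rw [e1]; ring
    _ ≤ (2*K^4) * (c₀ * (9 * ∑ z : GG ℓ n, rhoI ℓ n z * Tfun ℓ n f z)) := by
        apply mul_le_mul_of_nonneg_left (mul_le_mul_of_nonneg_left step2' hc₀) (by positivity)
    _ = 18*K^4 * (c₀ * ∑ z : GG ℓ n, rhoI ℓ n z * Tfun ℓ n f z) := by ring
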